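/- Fix 0 < k < m and let B_1, …, B_n : U → Mat_m(ℂ) be holomorphic maps of block upper-triangular form B_i(u) = [[B_i'(u), C_i(u)], [0, B_i''(u)]], where B_i'(u) ∈ Mat_k(ℂ), B_i''(u) ∈ Mat_{m−k}(ℂ) and C_i(u) is a k×(m−k) matrix. Then B_1, …, B_n solve the Schlesinger equations S_(n,m) on U if and only if: (a) B_1', …, B_n' solve the Schlesinger equations S_(n,k); (b) B_1'', …, B_n'' solve the Schlesinger equations S_(n,m−k); and (c) the C_i satisfy the linear Pfaffian system ∂C_i/∂u_j = (B_i' C_j − B_j' C_i + C_i B_j'' − C_j B_i'')/(u_i − u_j) for j ≠ i, and ∂C_i/∂u_i = −Σ_{j≠i} (B_i' C_j − B_j' C_i + C_i B_j'' − C_j B_i'')/(u_i − u_j). -/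

import Mathlib

/- STATEMENT 3: A block upper-triangular tuple B_i = [[B_i', C_i],[0, B_i'']] solves
the Schlesinger equations S_(n,m) iff the B_i' solve S_(n,k), the B_i'' solve
S_(n,m−k), and the C_i solve the stated linear Pfaffian system. -/

attribute [local instance] Matrix.normedAddCommGroup Matrix.normedSpace

/-- Partial derivative (in the direction of the `j`-th coordinate) of a matrix-valued
function of `u ∈ ℂ^n`. -/
noncomputable def pdg {n : ℕ} {a b : Type*} [Fintype a] [Fintype b]
    (F : (Fin n → ℂ) → Matrix a b ℂ) (j : Fin n) (u : Fin n → ℂ) : Matrix a b ℂ :=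
  fderiv ℂ F u (Pi.single j 1)

/-- The Schlesinger equations on `U`, for square matrices indexed by `ι`. -/
def IsSchlesingerSol {n : ℕ} {ι : Type*} [Fintype ι] [DecidableEq ι]
    (U : Set (Fin n → ℂ)) (A : Fin n → (Fin n → ℂ) → Matrix ι ι ℂ) : Prop :=
  (∀ i j, i ≠ j → ∀ u ∈ U,
    pdg (A i) j u = (u i - u j)⁻¹ • (A i u * A j u - A j u * A i u)) ∧
  (∀ i, ∀ u ∈ U,
    pdg (A i) i u
      = -∑ j ∈ Finset.univ.erase i, (u i - u j)⁻¹ • (A i u * A j u - A j u * A i u))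

/-- Embedding of the (1,1)-block as a continuous linear map. -/
noncomputable def embL (k l : ℕ) :
    Matrix (Fin k) (Fin k) ℂ →L[ℂ] Matrix (Fin k ⊕ Fin l) (Fin k ⊕ Fin l) ℂ :=
  LinearMap.toContinuousLinearMap
    { toFun := fun X => Matrix.fromBlocks X 0 0 0
      map_add' := fun X Y => by simp [Matrix.fromBlocks_add]
      map_smul' := fun c X => by simp [Matrix.fromBlocks_smul] }

/-- Embedding of the (1,2)-block as a continuous linear map. -/
noncomputable def embM (k l : ℕ) :
    Matrix (Fin k) (Fin l) ℂ →L[ℂ] Matrix (Fin k ⊕ Fin l) (Fin k ⊕ Fin l) ℂ :=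
  LinearMap.toContinuousLinearMap
    { toFun := fun X => Matrix.fromBlocks 0 X 0 0
      map_add' := fun X Y => by simp [Matrix.fromBlocks_add]
      map_smul' := fun c X => by simp [Matrix.fromBlocks_smul] }

/-- Embedding of the (2,2)-block as a continuous linear map. -/
noncomputable def embR (k l : ℕ) :
    Matrix (Fin l) (Fin l) ℂ →L[ℂ] Matrix (Fin k ⊕ Fin l) (Fin k ⊕ Fin l) ℂ :=
  LinearMap.toContinuousLinearMap
    { toFun := fun X => Matrix.fromBlocks 0 0 0 X
      map_add' := fun X Y => by simp [Matrix.fromBlocks_add]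
      map_smul' := fun c X => by simp [Matrix.fromBlocks_smul] }

lemma pdg_fromBlocks {n k l : ℕ}
    (F : (Fin n → ℂ) → Matrix (Fin k) (Fin k) ℂ)
    (G : (Fin n → ℂ) → Matrix (Fin k) (Fin l) ℂ)
    (H : (Fin n → ℂ) → Matrix (Fin l) (Fin l) ℂ)
    (u : Fin n → ℂ) (j : Fin n)
    (hF : DifferentiableAt ℂ F u) (hG : DifferentiableAt ℂ G u)
    (hH : DifferentiableAt ℂ H u) :
    pdg (fun v => Matrix.fromBlocks (F v) (G v) 0 (H v)) j u
      = Matrix.fromBlocks (pdg F j u) (pdg G j u) 0 (pdg H j u) := by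
  have heq : (fun v => Matrix.fromBlocks (F v) (G v) 0 (H v))
      = fun v => embL k l (F v) + embM k l (G v) + embR k l (H v) := by
    funext v
    show _ = Matrix.fromBlocks (F v) 0 0 0 + Matrix.fromBlocks 0 (G v) 0 0
        + Matrix.fromBlocks 0 0 0 (H v)
    simp [Matrix.fromBlocks_add]
  have hd : HasFDerivAt
      (fun v => embL k l (F v) + embM k l (G v) + embR k l (H v))
      (((embL k l).comp (fderiv ℂ F u) + (embM k l).comp (fderiv ℂ G u))
        + (embR k l).comp (fderiv ℂ H u)) u :=
    (((embL k l).hasFDerivAt.comp u hF.hasFDerivAt).add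
      ((embM k l).hasFDerivAt.comp u hG.hasFDerivAt)).add
      ((embR k l).hasFDerivAt.comp u hH.hasFDerivAt)
  rw [heq]
  unfold pdg
  rw [hd.fderiv]
  show embL k l (fderiv ℂ F u (Pi.single j 1)) + embM k l (fderiv ℂ G u (Pi.single j 1))
      + embR k l (fderiv ℂ H u (Pi.single j 1)) = _
  show Matrix.fromBlocks (fderiv ℂ F u (Pi.single j 1)) 0 0 0
      + Matrix.fromBlocks 0 (fderiv ℂ G u (Pi.single j 1)) 0 0
      + Matrix.fromBlocks 0 0 0 (fderiv ℂ H u (Pi.single j 1)) = _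
  simp [Matrix.fromBlocks_add, pdg]

lemma sum_fromBlocks {k l : ℕ} {ι : Type*} (s : Finset ι)
    (f : ι → Matrix (Fin k) (Fin k) ℂ) (g : ι → Matrix (Fin k) (Fin l) ℂ)
    (h : ι → Matrix (Fin l) (Fin l) ℂ) :
    ∑ j ∈ s, Matrix.fromBlocks (f j) (g j) (0 : Matrix (Fin l) (Fin k) ℂ) (h j)
      = Matrix.fromBlocks (∑ j ∈ s, f j) (∑ j ∈ s, g j) 0 (∑ j ∈ s, h j) := by
  classical
  induction s using Finset.induction with
  | empty => simp
  | insert _ _ hx ih =>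
      rw [Finset.sum_insert hx, Finset.sum_insert hx, Finset.sum_insert hx,
        Finset.sum_insert hx, ih, Matrix.fromBlocks_add, add_zero]

theorem schlesinger_block_triangular {n m k : ℕ} (hn : 2 ≤ n) (hm : 2 ≤ m)
    (hk0 : 0 < k) (hkm : k < m)
    (U : Set (Fin n → ℂ)) (hU : IsOpen U) (hUconn : IsConnected U)
    (hdist : ∀ u ∈ U, ∀ i j : Fin n, i ≠ j → u i ≠ u j)
    (B' : Fin n → (Fin n → ℂ) → Matrix (Fin k) (Fin k) ℂ)
    (C : Fin n → (Fin n → ℂ) → Matrix (Fin k) (Fin (m - k)) ℂ)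
    (B'' : Fin n → (Fin n → ℂ) → Matrix (Fin (m - k)) (Fin (m - k)) ℂ)
    (hB'hol : ∀ i, DifferentiableOn ℂ (B' i) U)
    (hChol : ∀ i, DifferentiableOn ℂ (C i) U)
    (hB''hol : ∀ i, DifferentiableOn ℂ (B'' i) U)
    (B : Fin n → (Fin n → ℂ) → Matrix (Fin k ⊕ Fin (m - k)) (Fin k ⊕ Fin (m - k)) ℂ)
    (hB : ∀ i u, B i u = Matrix.fromBlocks (B' i u) (C i u) 0 (B'' i u)) :
    IsSchlesingerSol U B ↔
      IsSchlesingerSol U B' ∧ IsSchlesingerSol U B'' ∧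
      ((∀ i j, i ≠ j → ∀ u ∈ U,
          pdg (C i) j u = (u i - u j)⁻¹ •
            (B' i u * C j u - B' j u * C i u + C i u * B'' j u - C j u * B'' i u)) ∧
       (∀ i, ∀ u ∈ U,
          pdg (C i) i u = -∑ j ∈ Finset.univ.erase i, (u i - u j)⁻¹ •
            (B' i u * C j u - B' j u * C i u + C i u * B'' j u - C j u * B'' i u))) := by
  -- pdg of B in blocks
  have hpdg : ∀ i j, ∀ u ∈ U, pdg (B i) j u
      = Matrix.fromBlocks (pdg (B' i) j u) (pdg (C i) j u) 0 (pdg (B'' i) j u) := by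
    intro i j u hu
    have hfun : B i = fun v => Matrix.fromBlocks (B' i v) (C i v) 0 (B'' i v) :=
      funext (hB i)
    rw [hfun]
    exact pdg_fromBlocks _ _ _ u j
      ((hB'hol i u hu).differentiableAt (hU.mem_nhds hu))
      ((hChol i u hu).differentiableAt (hU.mem_nhds hu))
      ((hB''hol i u hu).differentiableAt (hU.mem_nhds hu))
  -- the commutator in blocks
  have hcomm : ∀ i j (u : Fin n → ℂ),
      B i u * B j u - B j u * B i u
        = Matrix.fromBlocks (B' i u * B' j u - B' j u * B' i u)
            (B' i u * C j u - B' j u * C i u + C i u * B'' j u - C j u * B'' i u)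
            0 (B'' i u * B'' j u - B'' j u * B'' i u) := by
    intro i j u
    rw [hB i u, hB j u, Matrix.fromBlocks_multiply, Matrix.fromBlocks_multiply]
    simp only [Matrix.zero_mul, Matrix.mul_zero, add_zero, zero_add]
    rw [sub_eq_add_neg, Matrix.fromBlocks_neg, Matrix.fromBlocks_add,
      Matrix.fromBlocks_inj]
    refine ⟨by abel, by abel, by simp, by abel⟩
  have key₁ : ∀ i j, i ≠ j → ∀ u ∈ U,
      (pdg (B i) j u = (u i - u j)⁻¹ • (B i u * B j u - B j u * B i u)) ↔
      (pdg (B' i) j u = (u i - u j)⁻¹ • (B' i u * B' j u - B' j u * B' i u) ∧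
       pdg (B'' i) j u = (u i - u j)⁻¹ • (B'' i u * B'' j u - B'' j u * B'' i u) ∧
       pdg (C i) j u = (u i - u j)⁻¹ •
         (B' i u * C j u - B' j u * C i u + C i u * B'' j u - C j u * B'' i u)) := by
    intro i j hij u hu
    rw [hpdg i j u hu, hcomm, Matrix.fromBlocks_smul, Matrix.fromBlocks_inj]
    constructor
    · rintro ⟨h1, h2, -, h3⟩; exact ⟨h1, h3, h2⟩
    · rintro ⟨h1, h3, h2⟩; exact ⟨h1, h2, by simp, h3⟩
  have key₂ : ∀ i, ∀ u ∈ U,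
      (pdg (B i) i u
        = -∑ j ∈ Finset.univ.erase i, (u i - u j)⁻¹ • (B i u * B j u - B j u * B i u)) ↔
      (pdg (B' i) i u = -∑ j ∈ Finset.univ.erase i,
          (u i - u j)⁻¹ • (B' i u * B' j u - B' j u * B' i u) ∧
       pdg (B'' i) i u = -∑ j ∈ Finset.univ.erase i,
          (u i - u j)⁻¹ • (B'' i u * B'' j u - B'' j u * B'' i u) ∧
       pdg (C i) i u = -∑ j ∈ Finset.univ.erase i, (u i - u j)⁻¹ •
          (B' i u * C j u - B' j u * C i u + C i u * B'' j u - C j u * B'' i u)) := by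
    intro i u hu
    have hsum : ∑ j ∈ Finset.univ.erase i, (u i - u j)⁻¹ • (B i u * B j u - B j u * B i u)
        = Matrix.fromBlocks
            (∑ j ∈ Finset.univ.erase i,
              (u i - u j)⁻¹ • (B' i u * B' j u - B' j u * B' i u))
            (∑ j ∈ Finset.univ.erase i, (u i - u j)⁻¹ •
              (B' i u * C j u - B' j u * C i u + C i u * B'' j u - C j u * B'' i u))
            0
            (∑ j ∈ Finset.univ.erase i,
              (u i - u j)⁻¹ • (B'' i u * B'' j u - B'' j u * B'' i u)) := by
      rw [← sum_fromBlocks]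
      refine Finset.sum_congr rfl fun j _ => ?_
      rw [hcomm, Matrix.fromBlocks_smul, smul_zero]
    rw [hpdg i i u hu, hsum, Matrix.fromBlocks_neg, Matrix.fromBlocks_inj]
    constructor
    · rintro ⟨h1, h2, -, h3⟩; exact ⟨h1, h3, h2⟩
    · rintro ⟨h1, h3, h2⟩; exact ⟨h1, h2, by simp, h3⟩
  constructor
  · rintro ⟨h1, h2⟩
    exact ⟨⟨fun i j hij u hu => ((key₁ i j hij u hu).mp (h1 i j hij u hu)).1,
        fun i u hu => ((key₂ i u hu).mp (h2 i u hu)).1⟩,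
      ⟨fun i j hij u hu => ((key₁ i j hij u hu).mp (h1 i j hij u hu)).2.1,
        fun i u hu => ((key₂ i u hu).mp (h2 i u hu)).2.1⟩,
      fun i j hij u hu => ((key₁ i j hij u hu).mp (h1 i j hij u hu)).2.2,
      fun i u hu => ((key₂ i u hu).mp (h2 i u hu)).2.2⟩
  · rintro ⟨⟨h1, h2⟩, ⟨h3, h4⟩, h5, h6⟩
    exact ⟨fun i j hij u hu => (key₁ i j hij u hu).mpr
        ⟨h1 i j hij u hu, h3 i j hij u hu, h5 i j hij u hu⟩,
      fun i u hu => (key₂ i u hu).mpr ⟨h2 i u hu, h4 i u hu, h6 i u hu⟩⟩
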